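/- Let f : [a,b] → ℝ be C¹ with |f(a)| > δ, |f(b)| > δ, and |f(t)| + |f'(t)| > δ for all t ∈ [a,b], for some δ > 0. Then the number of zeros of f in [a,b] equals (1/(2δ')) ∫_a^b |f'(t)| 1_{|f(t)| < δ'} dt for every 0 < δ' ≤ δ — in particular all zeros of f in [a,b] are simple and finite in number. -/

import Mathlib

/-!
Since `|f| + |f'| > δ`, the derivative cannot vanish where `|f| < δ' ≤ δ`. Each connected
component `(c, d)` of `{|f| < δ'}` lies strictly inside `(a, b)`, and `|f| = δ'` at its ends.
By Rolle's theorem `f` is injective on `[c, d]`, so `f d = -f c`: the component contains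
exactly one zero, and, `f'` having constant sign there, `∫_c^d |f'| = |f d - f c| = 2δ'`.
Summing over the components, one per zero, gives the formula; finiteness of the zero set follows
by covering it, a compact set, with the components at level `δ`.
-/

open MeasureTheory Set

structure IsSublevelComponent (u : ℝ → ℝ) (r c d : ℝ) : Prop where
  lt : c < d
  left : u c = r
  right : u d = r
  lt_of_mem : ∀ s ∈ Ioo c d, u s < r

theorem exists_mem_Ioo_eq_forall_Ioc_lt {u : ℝ → ℝ} {r a t : ℝ} (hat : a ≤ t)
    (hu : ContinuousOn u (Icc a t)) (ha : r < u a) (ht : u t < r) :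
    ∃ c ∈ Ioo a t, u c = r ∧ ∀ s ∈ Ioc c t, u s < r := by
  set A := {s ∈ Icc a t | u s = r}
  have hA : IsClosed A := hu.preimage_isClosed_of_isClosed isClosed_Icc isClosed_singleton
  have hAbdd : BddAbove A := ⟨t, fun s hs => hs.1.2⟩
  obtain ⟨c₀, hc₀⟩ := intermediate_value_Icc' hat hu ⟨ht.le, ha.le⟩
  have hc : sSup A ∈ A := hA.csSup_mem ⟨c₀, hc₀⟩ hAbdd
  refine ⟨sSup A, ⟨hc.1.1.lt_of_ne ?_, hc.1.2.lt_of_ne ?_⟩, hc.2, fun s hs => ?_⟩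
  · intro h
    exact ha.ne' (h ▸ hc.2)
  · intro h
    exact ht.ne (h ▸ hc.2)
  · by_contra! hrs
    obtain ⟨s', hs', hs'r⟩ := intermediate_value_Icc' hs.2
      (hu.mono (Icc_subset_Icc_left (hc.1.1.trans hs.1.le))) ⟨ht.le, hrs⟩
    have : s' ≤ sSup A := le_csSup hAbdd ⟨⟨hc.1.1.trans (hs.1.le.trans hs'.1), hs'.2⟩, hs'r⟩
    linarith [hs.1, hs'.1]

theorem exists_mem_Ioo_eq_forall_Ico_lt {u : ℝ → ℝ} {r t b : ℝ} (htb : t ≤ b)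
    (hu : ContinuousOn u (Icc t b)) (hb : r < u b) (ht : u t < r) :
    ∃ d ∈ Ioo t b, u d = r ∧ ∀ s ∈ Ico t d, u s < r := by
  have hneg : ContinuousOn (fun x => u (-x)) (Icc (-b) (-t)) :=
    hu.comp continuous_neg.continuousOn fun x hx => ⟨le_neg.2 hx.2, neg_le.1 hx.1⟩
  obtain ⟨c, hc, hcr, hlt⟩ := exists_mem_Ioo_eq_forall_Ioc_lt (neg_le_neg htb) hneg
    (by rwa [neg_neg]) (by rwa [neg_neg])
  refine ⟨-c, ⟨lt_neg.1 hc.2, neg_lt.1 hc.1⟩, hcr, fun s hs => ?_⟩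
  simpa using hlt (-s) ⟨lt_neg.2 hs.2, neg_le_neg hs.1⟩

theorem exists_isSublevelComponent {u : ℝ → ℝ} {r a b t : ℝ} (hu : ContinuousOn u (Icc a b))
    (ha : r < u a) (hb : r < u b) (ht : t ∈ Icc a b) (hut : u t < r) :
    ∃ c d, a < c ∧ d < b ∧ t ∈ Ioo c d ∧ IsSublevelComponent u r c d := by
  obtain ⟨c, hc, hcr, hleft⟩ :=
    exists_mem_Ioo_eq_forall_Ioc_lt ht.1 (hu.mono (Icc_subset_Icc_right ht.2)) ha hut
  obtain ⟨d, hd, hdr, hright⟩ :=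
    exists_mem_Ioo_eq_forall_Ico_lt ht.2 (hu.mono (Icc_subset_Icc_left ht.1)) hb hut
  refine ⟨c, d, hc.1, hd.2, ⟨hc.2, hd.1⟩, hc.2.trans hd.1, hcr, hdr, fun s hs => ?_⟩
  rcases le_or_gt s t with hst | hts
  exacts [hleft s ⟨hs.1, hst⟩, hright s ⟨hts.le, hs.2⟩]

namespace IsSublevelComponent

variable {r c d : ℝ}

theorem eq_of_mem {u : ℝ → ℝ} {c' d' t : ℝ} (h : IsSublevelComponent u r c d)
    (h' : IsSublevelComponent u r c' d') (ht : t ∈ Ioo c d) (ht' : t ∈ Ioo c' d') :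
    c = c' ∧ d = d' := by
  constructor
  · refine le_antisymm (not_lt.1 fun hlt => ?_) (not_lt.1 fun hlt => ?_)
    · exact (h'.lt_of_mem c ⟨hlt, ht.1.trans ht'.2⟩).ne h.left
    · exact (h.lt_of_mem c' ⟨hlt, ht'.1.trans ht.2⟩).ne h'.left
  · refine le_antisymm (not_lt.1 fun hlt => ?_) (not_lt.1 fun hlt => ?_)
    · exact (h.lt_of_mem d' ⟨ht.1.trans ht'.2, hlt⟩).ne h'.right
    · exact (h'.lt_of_mem d ⟨ht'.1.trans ht.2, hlt⟩).ne h.right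

variable {f : ℝ → ℝ}

theorem pos (h : IsSublevelComponent (|f ·|) r c d) : 0 < r :=
  (abs_nonneg _).trans_lt (h.lt_of_mem ((c + d) / 2) ⟨by linarith [h.lt], by linarith [h.lt]⟩)

theorem apply_right_eq_neg (h : IsSublevelComponent (|f ·|) r c d) (hinj : InjOn f (Icc c d)) :
    f d = -f c := by
  have hfc : |f c| = r := h.left
  have hfd : |f d| = r := h.right
  rcases abs_eq_abs.1 (hfd.trans hfc.symm) with hdc | hdc
  · exact absurd (hinj (right_mem_Icc.2 h.lt.le) (left_mem_Icc.2 h.lt.le) hdc) h.lt.ne'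
  · exact hdc

theorem exists_zero (h : IsSublevelComponent (|f ·|) r c d) (hf : ContinuousOn f (Icc c d))
    (hinj : InjOn f (Icc c d)) : ∃ z ∈ Ioo c d, f z = 0 := by
  have hfc : f c ≠ 0 := fun h0 => by
    have habs : |f c| = r := h.left
    rw [h0, abs_zero] at habs
    exact h.pos.ne habs
  have hfd := h.apply_right_eq_neg hinj
  rcases hfc.lt_or_gt with hneg | hpos
  · exact intermediate_value_Ioo h.lt.le hf ⟨hneg, by linarith⟩
  · exact intermediate_value_Ioo' h.lt.le hf ⟨by linarith, hpos⟩

end IsSublevelComponent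

theorem injOn_Icc_of_hasDerivAt_ne_zero {f f' : ℝ → ℝ} {c d : ℝ}
    (hf : ContinuousOn f (Icc c d)) (hff' : ∀ x ∈ Ioo c d, HasDerivAt f (f' x) x)
    (hf' : ∀ x ∈ Ioo c d, f' x ≠ 0) : InjOn f (Icc c d) := by
  have hne : ∀ x ∈ Icc c d, ∀ y ∈ Icc c d, x < y → f x ≠ f y := by
    intro x hx y hy hxy hfxy
    have hsub : Ioo x y ⊆ Ioo c d := Ioo_subset_Ioo hx.1 hy.2
    obtain ⟨z, hz, hz0⟩ := exists_hasDerivAt_eq_zero hxy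
      (hf.mono (Icc_subset_Icc hx.1 hy.2)) hfxy fun z hz => hff' z (hsub hz)
    exact hf' z (hsub hz) hz0
  intro x hx y hy hfxy
  by_contra hxy
  rcases lt_or_gt_of_ne hxy with hlt | hlt
  exacts [hne x hx y hy hlt hfxy, hne y hy x hx hlt hfxy.symm]

theorem integral_Ioo_abs_deriv {f f' : ℝ → ℝ} {c d : ℝ} (hcd : c ≤ d)
    (hf : ContinuousOn f (Icc c d)) (hff' : ∀ x ∈ Ioo c d, HasDerivAt f (f' x) x)
    (hf'c : ContinuousOn f' (Icc c d)) (hf' : ∀ x ∈ Ioo c d, f' x ≠ 0) :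
    ∫ x in Ioo c d, |f' x| = |f d - f c| := by
  have hFTC : ∫ x in Ioo c d, f' x = f d - f c := by
    rw [← integral_Ioc_eq_integral_Ioo, ← intervalIntegral.integral_of_le hcd,
      intervalIntegral.integral_eq_sub_of_hasDerivAt_of_le hcd hf hff'
        (hf'c.intervalIntegrable_of_Icc hcd)]
  have hf'o : ContinuousOn f' (Ioo c d) := hf'c.mono Ioo_subset_Icc_self
  have hnn : 0 ≤ ∫ x in Ioo c d, |f' x| := integral_nonneg fun x => abs_nonneg _
  -- by connectedness, `|f'| = f'` or `|f'| = -f'` on the whole of `(c, d)`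
  rw [← abs_of_nonneg hnn]
  rcases isPreconnected_Ioo.eq_or_eq_neg_of_sq_eq hf'o.abs hf'o
    (fun x _ => sq_abs (f' x)) (hf' _) with hsign | hsign
  · rw [setIntegral_congr_fun measurableSet_Ioo hsign, hFTC]
  · rw [setIntegral_congr_fun measurableSet_Ioo hsign, integral_neg', hFTC, abs_neg]

theorem IsSublevelComponent.integral_Ioo_abs_deriv {f f' : ℝ → ℝ} {r c d : ℝ}
    (h : IsSublevelComponent (|f ·|) r c d) (hf : ContinuousOn f (Icc c d))
    (hff' : ∀ x ∈ Ioo c d, HasDerivAt f (f' x) x) (hf'c : ContinuousOn f' (Icc c d))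
    (hf' : ∀ x ∈ Ioo c d, f' x ≠ 0) :
    ∫ x in Ioo c d, |f' x| = 2 * r := by
  have hfc : |f c| = r := h.left
  rw [_root_.integral_Ioo_abs_deriv h.lt.le hf hff' hf'c hf',
    h.apply_right_eq_neg (injOn_Icc_of_hasDerivAt_ne_zero hf hff' hf'),
    show -f c - f c = -(2 * f c) by ring, abs_neg, abs_mul, abs_two, hfc]

theorem ContDiffOn.hasDerivAt_derivWithin_Icc {f : ℝ → ℝ} {a b x : ℝ}
    (hf : ContDiffOn ℝ 1 f (Icc a b)) (hx : x ∈ Ioo a b) :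
    HasDerivAt f (derivWithin f (Icc a b) x) x := by
  have hmem : Icc a b ∈ nhds x := Icc_mem_nhds hx.1 hx.2
  rw [derivWithin_of_mem_nhds hmem]
  exact ((hf.differentiableOn one_ne_zero x (Ioo_subset_Icc_self hx)).differentiableAt
    hmem).hasDerivAt

theorem ContDiffOn.continuousOn_Ioo_derivWithin_Icc {f : ℝ → ℝ} {a b : ℝ}
    (hf : ContDiffOn ℝ 1 f (Icc a b)) : ContinuousOn (derivWithin f (Icc a b)) (Ioo a b) :=
  ((hf.mono Ioo_subset_Icc_self).continuousOn_deriv_of_isOpen isOpen_Ioo le_rfl).congr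
    fun _ hx => derivWithin_of_mem_nhds (Icc_mem_nhds hx.1 hx.2)

section CountingFormula

variable {a b δ r : ℝ} {f : ℝ → ℝ}

theorem exists_isSublevelComponent_abs (hf : ContDiffOn ℝ 1 f (Icc a b))
    (ha : δ < |f a|) (hb : δ < |f b|)
    (hnd : ∀ t ∈ Icc a b, δ < |f t| + |derivWithin f (Icc a b) t|)
    (hr : r ≤ δ) {t : ℝ} (ht : t ∈ Icc a b) (hft : |f t| < r) :
    ∃ c d, t ∈ Ioo c d ∧ Icc c d ⊆ Ioo a b ∧ IsSublevelComponent (|f ·|) r c d ∧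
      InjOn f (Icc c d) ∧ (∃ z ∈ Ioo c d, f z = 0) ∧
      ∫ x in Ioo c d, |derivWithin f (Icc a b) x| = 2 * r := by
  obtain ⟨c, d, hac, hdb, htcd, hcomp⟩ := exists_isSublevelComponent hf.continuousOn.abs
    (hr.trans_lt ha) (hr.trans_lt hb) ht hft
  have hsub : Icc c d ⊆ Ioo a b := Icc_subset_Ioo hac hdb
  have hfcd : ContinuousOn f (Icc c d) := hf.continuousOn.mono (hsub.trans Ioo_subset_Icc_self)
  have hderiv : ∀ x ∈ Ioo c d, HasDerivAt f (derivWithin f (Icc a b) x) x :=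
    fun x hx => hf.hasDerivAt_derivWithin_Icc (hsub (Ioo_subset_Icc_self hx))
  have hderiv_ne : ∀ x ∈ Ioo c d, derivWithin f (Icc a b) x ≠ 0 := by
    intro x hx h0
    have := hnd x (Ioo_subset_Icc_self (hsub (Ioo_subset_Icc_self hx)))
    rw [h0, abs_zero, add_zero] at this
    linarith [hcomp.lt_of_mem x hx]
  have hderiv_cont := hf.continuousOn_Ioo_derivWithin_Icc.mono hsub
  have hinj := injOn_Icc_of_hasDerivAt_ne_zero hfcd hderiv hderiv_ne
  exact ⟨c, d, htcd, hsub, hcomp, hinj, hcomp.exists_zero hfcd hinj,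
    hcomp.integral_Ioo_abs_deriv hfcd hderiv hderiv_cont hderiv_ne⟩

theorem finite_zeros (hf : ContDiffOn ℝ 1 f (Icc a b)) (hδ : 0 < δ)
    (ha : δ < |f a|) (hb : δ < |f b|)
    (hnd : ∀ t ∈ Icc a b, δ < |f t| + |derivWithin f (Icc a b) t|) :
    {t ∈ Icc a b | f t = 0}.Finite := by
  set Z := {t ∈ Icc a b | f t = 0}
  choose! c d hmem _ _ hinj _ _ using fun z (hz : z ∈ Z) =>
    exists_isSublevelComponent_abs hf ha hb hnd le_rfl hz.1 (by rwa [hz.2, abs_zero])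
  have hZ : IsCompact Z := isCompact_Icc.of_isClosed_subset
    (hf.continuousOn.preimage_isClosed_of_isClosed isClosed_Icc isClosed_singleton)
    fun _ ht => ht.1
  obtain ⟨T, hTZ, hT, hcover⟩ := hZ.elim_finite_subcover_image (fun _ _ => isOpen_Ioo)
    fun z hz => mem_biUnion hz (hmem z hz)
  refine hT.subset fun z hz => ?_
  obtain ⟨w, hw, hzw⟩ := mem_iUnion₂.1 (hcover hz)
  have hwZ := hTZ hw
  rwa [hinj w hwZ (Ioo_subset_Icc_self hzw) (Ioo_subset_Icc_self (hmem w hwZ))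
    (hz.2.trans hwZ.2.symm)]

theorem integral_abs_derivWithin_mul_ite_abs_lt (hab : a ≤ b) (hf : ContDiffOn ℝ 1 f (Icc a b))
    (ha : δ < |f a|) (hb : δ < |f b|)
    (hnd : ∀ t ∈ Icc a b, δ < |f t| + |derivWithin f (Icc a b) t|)
    (hZ : {t ∈ Icc a b | f t = 0}.Finite) (hr : 0 < r) (hrδ : r ≤ δ) :
    ∫ t in a..b, |derivWithin f (Icc a b) t| * (if |f t| < r then 1 else 0)
      = 2 * r * {t ∈ Icc a b | f t = 0}.ncard := by
  set Z := {t ∈ Icc a b | f t = 0}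
  set g := derivWithin f (Icc a b)
  choose! c d hmem hsub hcomp hinj _ hint using fun z (hz : z ∈ Z) =>
    exists_isSublevelComponent_abs hf ha hb hnd hrδ hz.1 (by rwa [hz.2, abs_zero])
  have hdisj : (hZ.toFinset : Set ℝ).PairwiseDisjoint fun z => Ioo (c z) (d z) := by
    intro z hz w hw hzw
    refine disjoint_left.2 fun t htz htw => hzw ?_
    rw [Finite.coe_toFinset] at hz hw
    obtain ⟨hc, hd⟩ := (hcomp z hz).eq_of_mem (hcomp w hw) htz htw
    refine hinj z hz (Ioo_subset_Icc_self (hmem z hz)) ?_ (hz.2.trans hw.2.symm)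
    rw [hc, hd]
    exact Ioo_subset_Icc_self (hmem w hw)
  set U := ⋃ z ∈ hZ.toFinset, Ioo (c z) (d z)
  have hU : ∀ t ∈ Icc a b, t ∈ U ↔ |f t| < r := by
    intro t ht
    simp only [U, mem_iUnion, Finite.mem_toFinset, exists_prop]
    constructor
    · rintro ⟨z, hz, htz⟩
      exact (hcomp z hz).lt_of_mem t htz
    · intro hft
      obtain ⟨c', d', htcd, hsub', hcomp', -, ⟨w, hw, hfw⟩, -⟩ :=
        exists_isSublevelComponent_abs hf ha hb hnd hrδ ht hft
      have hwZ : w ∈ Z := ⟨Ioo_subset_Icc_self (hsub' (Ioo_subset_Icc_self hw)), hfw⟩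
      obtain ⟨hc, hd⟩ := hcomp'.eq_of_mem (hcomp w hwZ) hw (hmem w hwZ)
      exact ⟨w, hwZ, hc ▸ hd ▸ htcd⟩
  have hUsub : U ⊆ Ioc a b := iUnion₂_subset fun z hz =>
    (Ioo_subset_Icc_self.trans (hsub z (hZ.mem_toFinset.1 hz))).trans Ioo_subset_Ioc_self
  calc ∫ t in a..b, |g t| * (if |f t| < r then 1 else 0)
      = ∫ t in Ioc a b, U.indicator (|g ·|) t := by
        rw [intervalIntegral.integral_of_le hab]
        refine setIntegral_congr_fun measurableSet_Ioc fun t ht => ?_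
        by_cases htU : t ∈ U
        · simp [htU, (hU t (Ioc_subset_Icc_self ht)).1 htU]
        · simp [htU, mt (hU t (Ioc_subset_Icc_self ht)).2 htU]
    _ = ∫ t in U, |g t| := by
        rw [setIntegral_indicator (Finset.measurableSet_biUnion _ fun _ _ => measurableSet_Ioo),
          inter_eq_right.2 hUsub]
    _ = ∑ z ∈ hZ.toFinset, ∫ t in Ioo (c z) (d z), |g t| := by
        refine integral_biUnion_finset _ (fun _ _ => measurableSet_Ioo) hdisj fun z hz => ?_
        have hcont := hf.continuousOn_Ioo_derivWithin_Icc.mono (hsub z (hZ.mem_toFinset.1 hz))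
        exact hcont.abs.integrableOn_Icc.mono_set Ioo_subset_Icc_self
    _ = 2 * r * Z.ncard := by
        rw [Finset.sum_congr rfl fun z hz => hint z (hZ.mem_toFinset.1 hz), Finset.sum_const,
          ncard_eq_toFinset_card Z hZ, nsmul_eq_mul, mul_comm]

end CountingFormula

/-- Approximate Kac–Rice counting formula: if `f` is `C¹` on `[a,b]`, with `|f| > δ` at the
endpoints and `|f(t)| + |f'(t)| > δ` on `[a,b]`, then the zeros of `f` in `[a,b]` are
finitely many and simple, and for every `0 < δ' ≤ δ` their number equals
`(1/(2δ')) ∫_a^b |f'(t)| 1_{|f(t)| < δ'} dt`. -/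
theorem stmt16 (a b : ℝ) (hab : a ≤ b) (f : ℝ → ℝ) (δ : ℝ) (hδ : 0 < δ)
    (hf : ContDiffOn ℝ 1 f (Set.Icc a b))
    (ha : δ < |f a|) (hb : δ < |f b|)
    (hnd : ∀ t ∈ Set.Icc a b, δ < |f t| + |derivWithin f (Set.Icc a b) t|) :
    {t ∈ Set.Icc a b | f t = 0}.Finite ∧
    (∀ t ∈ Set.Icc a b, f t = 0 → derivWithin f (Set.Icc a b) t ≠ 0) ∧
    ∀ δ' : ℝ, 0 < δ' → δ' ≤ δ →
      ({t ∈ Set.Icc a b | f t = 0}.ncard : ℝ)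
        = (1 / (2 * δ')) *
            ∫ t in a..b, |derivWithin f (Set.Icc a b) t| * (if |f t| < δ' then 1 else 0) := by
  have hZ := finite_zeros hf hδ ha hb hnd
  refine ⟨hZ, fun t ht hft hderiv => ?_, fun δ' hδ' hδ'δ => ?_⟩
  · have := hnd t ht
    rw [hft, hderiv, abs_zero, add_zero] at this
    exact this.not_gt hδ
  · rw [integral_abs_derivWithin_mul_ite_abs_lt hab hf ha hb hnd hZ hδ' hδ'δ]
    field_simp
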